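/- Let Ω = [−1,1], n = 4, and k(x,y) = f(|x−y|) with f: (0,∞) → [0,∞) completely monotone, and suppose r ≤ 8/3 and R ≥ 1. Then a maximizer x_1 < x_2 < x_3 < x_4 of Σ_{i≠j} k(x_i, x_j) over 4-point (r,R)-admissible configurations is given as follows: (ii) if 2r + 4R ≥ 8 > 3r + 2R, then x_1 = −1 + R/4, x_2 = x_1 + r/4, x_3 = x_2 + r/4, x_4 = 1 − R/4; (iii) if 8 > 3r + 2R and 6R + r ≥ 8 > 2r + 4R, then x_1 = −1 + R/4, x_4 = 1 − R/4, x_3 = x_4 − R/2, x_2 = x_3 − r/4; (iv) if 8 > max{3r + 2R, 6R + r, 2r + 4R}, then x_1 = −1 + R/4, x_2 = x_1 + R/2, x_4 = 1 − R/4, x_3 = x_4 − R/2. -/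

import Mathlib

noncomputable section

open Set

/-- A 4-point `(r,R)`-admissible configuration in `[-1,1]` (with `n = 4`, `d = 1`). -/
def Admissible4 (r R : ℝ) (x : Fin 4 → ℝ) : Prop :=
  (∀ i, x i ∈ Set.Icc (-1:ℝ) 1) ∧
  (∀ i j, i ≠ j → r/4 ≤ |x i - x j|) ∧
  ∀ y ∈ Set.Icc (-1:ℝ) 1, ∃ i, |y - x i| ≤ R/4

/-- `f` is completely monotone on `(0, ∞)`. -/
def CompletelyMonotone (f : ℝ → ℝ) : Prop :=
  ContDiffOn ℝ (⊤ : ℕ∞) f (Set.Ioi 0) ∧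
  ∀ (ℓ : ℕ), ∀ t ∈ Set.Ioi (0:ℝ), 0 ≤ (-1:ℝ) ^ ℓ * iteratedDerivWithin ℓ f (Set.Ioi 0) t

/-- The discrete energy `∑_{i ≠ j} k(x_i, x_j)` of a 4-point configuration. -/
def energy4 (k : ℝ → ℝ → ℝ) (x : Fin 4 → ℝ) : ℝ :=
  ∑ i : Fin 4, ∑ j : Fin 4, if i = j then 0 else k (x i) (x j)

/-- `x` is a maximizer of the discrete energy over 4-point `(r,R)`-admissible
configurations in `[-1,1]` for the kernel `k(a,b) = f(|a-b|)`. -/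
def IsMaxConfig (r R : ℝ) (f : ℝ → ℝ) (x : Fin 4 → ℝ) : Prop :=
  Admissible4 r R x ∧ ∀ y : Fin 4 → ℝ, Admissible4 r R y →
    energy4 (fun a b => f |a - b|) y ≤ energy4 (fun a b => f |a - b|) x

/-! ### Auxiliary analytic lemmas -/

lemma cm_deriv_nonpos {f : ℝ → ℝ} (hf : CompletelyMonotone f) :
    ∀ x ∈ Set.Ioi (0:ℝ), deriv f x ≤ 0 := by
  intro x hx
  have h1 := hf.2 1 x hx
  rw [iteratedDerivWithin_one,
    derivWithin_of_isOpen isOpen_Ioi hx] at h1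
  nlinarith [h1]

lemma cm_antitone {f : ℝ → ℝ} (hf : CompletelyMonotone f) : AntitoneOn f (Set.Ioi 0) := by
  apply antitoneOn_of_deriv_nonpos (convex_Ioi 0) (hf.1.continuousOn)
  · rw [interior_Ioi]
    exact hf.1.differentiableOn (by simp)
  · rw [interior_Ioi]
    exact cm_deriv_nonpos hf

lemma cm_convex {f : ℝ → ℝ} (hf : CompletelyMonotone f) : ConvexOn ℝ (Set.Ioi 0) f := by
  have hop : IsOpen (Set.Ioi (0:ℝ)) := isOpen_Ioi
  have hd1 : ∀ y ∈ Set.Ioi (0:ℝ), iteratedDerivWithin 1 f (Set.Ioi 0) y = deriv f y := by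
    intro y hy
    rw [iteratedDerivWithin_one, derivWithin_of_isOpen hop hy]
  apply convexOn_of_deriv2_nonneg (convex_Ioi 0) (hf.1.continuousOn)
  · rw [interior_Ioi]; exact hf.1.differentiableOn (by simp)
  · rw [interior_Ioi]
    exact (hf.1.deriv_of_isOpen hop (m := 1) (by exact WithTop.coe_le_coe.2 le_top)).differentiableOn one_ne_zero
  · rw [interior_Ioi]
    intro x hx
    have h2 := hf.2 2 x hx
    have e2 : iteratedDerivWithin 2 f (Set.Ioi 0) x = deriv (deriv f) x := by
      rw [iteratedDerivWithin_succ,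
        derivWithin_of_isOpen hop hx]
      apply Filter.EventuallyEq.deriv_eq
      filter_upwards [hop.mem_nhds hx] with y hy using hd1 y hy
    have e3 : deriv^[2] f x = deriv (deriv f) x := by
      simp [Function.iterate_succ_apply']
    rw [e2] at h2
    rw [e3]
    nlinarith [h2]

lemma slide {f : ℝ → ℝ} (hconv : ConvexOn ℝ (Set.Ioi 0) f) {u v p q : ℝ} (hu : 0 < u)
    (hup : u ≤ p) (huq : u ≤ q) (hsum : u + v = p + q) :
    f p + f q ≤ f u + f v := by
  have hpv : p ≤ v := by linarith
  have hv : 0 < v := lt_of_lt_of_le hu (le_trans hup hpv)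
  rcases eq_or_lt_of_le (le_trans hup hpv) with h | h
  · have hp : p = u := le_antisymm (by linarith) hup
    have hq : q = u := le_antisymm (by linarith) huq
    rw [hp, hq, h]
  · have hvu : 0 < v - u := by linarith
    set t := (v - p)/(v - u) with ht
    have ht0 : 0 ≤ t := div_nonneg (by linarith) (by linarith)
    have ht1 : 0 ≤ 1 - t := by
      rw [sub_nonneg, ht]
      exact (div_le_one hvu).2 (by linarith)
    have htv : t * (v - u) = v - p := by
      rw [ht]; field_simp
    have e1 : t * u + (1 - t) * v = p := by nlinarith [htv]
    have e2 : (1 - t) * u + t * v = q := by nlinarith [htv]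
    have h1 := hconv.2 (Set.mem_Ioi.2 hu) (Set.mem_Ioi.2 hv) ht0 ht1 (by ring)
    have h2 := hconv.2 (Set.mem_Ioi.2 hu) (Set.mem_Ioi.2 hv) ht1 ht0 (by ring)
    simp only [smul_eq_mul] at h1 h2
    rw [e1] at h1
    rw [e2] at h2
    linarith

lemma slide' {f : ℝ → ℝ} (hconv : ConvexOn ℝ (Set.Ioi 0) f) (hanti : AntitoneOn f (Set.Ioi 0))
    {u v p q : ℝ} (hu : 0 < u) (hv : 0 < v)
    (hup : u ≤ p) (huq : u ≤ q) (hsum : u + v ≤ p + q) :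
    f p + f q ≤ f u + f v := by
  have h1 : f p + f q ≤ f u + f (p + q - u) := slide hconv hu hup huq (by ring)
  have h2 : f (p + q - u) ≤ f v :=
    hanti (Set.mem_Ioi.2 hv) (Set.mem_Ioi.2 (by linarith)) (by linarith)
  linarith

lemma fmono {f : ℝ → ℝ} (hanti : AntitoneOn f (Set.Ioi 0)) {u v : ℝ}
    (hu : 0 < u) (huv : u ≤ v) : f v ≤ f u :=
  hanti (Set.mem_Ioi.2 hu) (Set.mem_Ioi.2 (lt_of_lt_of_le hu huv)) huv

/-! ### The three optimization kernel lemmas -/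

section Cases
variable {f : ℝ → ℝ} {m M S a b c : ℝ}

lemma caseII (hconv : ConvexOn ℝ (Set.Ioi 0) f) (hanti : AntitoneOn f (Set.Ioi 0)) (hm : 0 < m) (hmS : 2*m < S)
    (ha : m ≤ a) (hb : m ≤ b) (hc : m ≤ c) (hT : S ≤ a + b + c) :
    f a + f b + f c + f (a+b) + f (b+c) + f (a+b+c)
      ≤ f m + f m + f (S - 2*m) + f (2*m) + f (S - m) + f S := by
  have h1 : f a + f b ≤ f m + f (a + b - m) := slide hconv hm ha hb (by ring)
  have h2 : f (a + b - m) + f c ≤ f m + f (a + b + c - 2*m) :=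
    slide hconv hm (by linarith) hc (by ring)
  have h3 : f (a + b + c - 2*m) ≤ f (S - 2*m) := fmono hanti (by linarith) (by linarith)
  have h4 : f (a+b) + f (b+c) ≤ f (2*m) + f (S - m) :=
    slide' hconv hanti (by linarith) (by linarith) (by linarith) (by linarith) (by linarith)
  have h5 : f (a+b+c) ≤ f S := fmono hanti (by linarith) hT
  linarith

lemma caseIII (hconv : ConvexOn ℝ (Set.Ioi 0) f) (hanti : AntitoneOn f (Set.Ioi 0)) (hm : 0 < m) (hmM : m ≤ M) (hA : m ≤ S - M - m)
    (ha : m ≤ a) (ha' : a ≤ M) (hb : m ≤ b) (hb' : b ≤ M) (hc : m ≤ c) (hc' : c ≤ M)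
    (hT : S ≤ a + b + c) :
    f a + f b + f c + f (a+b) + f (b+c) + f (a+b+c)
      ≤ f (S - M - m) + f m + f M + f (S - M) + f (m + M) + f S := by
  have hsing : f a + f b + f c ≤ f m + f M + f (a + b + c - m - M) := by
    rcases le_or_gt (b + c) (m + M) with hbc | hbc
    · have s1 : f b + f c ≤ f m + f (b + c - m) := slide hconv hm hb hc (by ring)
      have s2 : f a + f (b + c - m) ≤ f (a + b + c - m - M) + f M :=
        slide hconv (by linarith) (by linarith) (by linarith) (by ring)
      linarith
    · have s1 : f b + f c ≤ f (b + c - M) + f M :=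
        slide hconv (by linarith) (by linarith) (by linarith) (by ring)
      have s2 : f a + f (b + c - M) ≤ f m + f (a + b + c - m - M) :=
        slide hconv hm ha (by linarith) (by ring)
      linarith
  have h3 : f (a + b + c - m - M) ≤ f (S - M - m) := fmono hanti (by linarith) (by linarith)
  have h4 : f (a+b) + f (b+c) ≤ f (S - M) + f (m + M) :=
    slide' hconv hanti (by linarith) (by linarith) (by linarith) (by linarith) (by linarith)
  have h5 : f (a+b+c) ≤ f S := fmono hanti (by linarith) hT
  linarith

lemma caseIV (hconv : ConvexOn ℝ (Set.Ioi 0) f) (hanti : AntitoneOn f (Set.Ioi 0)) (hm : 0 < m) (h2M : 2*M < S)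
    (ha : m ≤ a) (ha' : a ≤ M) (hb : m ≤ b) (hb' : b ≤ M) (hc : m ≤ c) (hc' : c ≤ M)
    (hT : S ≤ a + b + c) :
    f a + f b + f c + f (a+b) + f (b+c) + f (a+b+c)
      ≤ f M + f (S - 2*M) + f M + f (S - M) + f (S - M) + f S := by
  have hM : 0 < M := lt_of_lt_of_le hm (le_trans ha ha')
  have h1 : f a + f b ≤ f (a + b - M) + f M :=
    slide hconv (by linarith) (by linarith) (by linarith) (by ring)
  have h2 : f (a + b - M) + f c ≤ f (a + b + c - 2*M) + f M :=
    slide hconv (by linarith) (by linarith) (by linarith) (by ring)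
  have h3 : f (a + b + c - 2*M) ≤ f (S - 2*M) := fmono hanti (by linarith) (by linarith)
  have h4 : f (a+b) ≤ f (S - M) := fmono hanti (by linarith) (by linarith)
  have h5 : f (b+c) ≤ f (S - M) := fmono hanti (by linarith) (by linarith)
  have h6 : f (a+b+c) ≤ f S := fmono hanti (by linarith) hT
  linarith

end Cases

/-! ### Structural lemmas -/

lemma adm_perm {r R : ℝ} {y : Fin 4 → ℝ} (σ : Equiv.Perm (Fin 4))
    (h : Admissible4 r R y) : Admissible4 r R (y ∘ σ) := by
  obtain ⟨h1, h2, h3⟩ := h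
  refine ⟨fun i => h1 _, fun i j hij => h2 _ _ (fun e => hij (σ.injective e)), fun t ht => ?_⟩
  obtain ⟨i, hi⟩ := h3 t ht
  exact ⟨σ.symm i, by simpa using hi⟩

lemma energy_perm (k : ℝ → ℝ → ℝ) (y : Fin 4 → ℝ) (σ : Equiv.Perm (Fin 4)) :
    energy4 k (y ∘ σ) = energy4 k y := by
  unfold energy4
  calc ∑ i : Fin 4, ∑ j : Fin 4, (if i = j then 0 else k ((y ∘ σ) i) ((y ∘ σ) j))
      = ∑ i : Fin 4, ∑ j : Fin 4, (if σ i = σ j then 0 else k (y (σ i)) (y (σ j))) := by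
        refine Finset.sum_congr rfl fun i _ => Finset.sum_congr rfl fun j _ => ?_
        simp [Function.comp, Equiv.apply_eq_iff_eq]
    _ = ∑ i : Fin 4, ∑ j : Fin 4, (if σ i = j then 0 else k (y (σ i)) (y j)) := by
        refine Finset.sum_congr rfl fun i _ => ?_
        exact Equiv.sum_comp σ fun j => if σ i = j then 0 else k (y (σ i)) (y j)
    _ = ∑ i : Fin 4, ∑ j : Fin 4, (if i = j then 0 else k (y i) (y j)) :=
        Equiv.sum_comp σ fun i => ∑ j : Fin 4, if i = j then 0 else k (y i) (y j)

lemma energy4_sorted (f : ℝ → ℝ) (z : Fin 4 → ℝ)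
    (h01 : z 0 ≤ z 1) (h12 : z 1 ≤ z 2) (h23 : z 2 ≤ z 3) :
    energy4 (fun a b => f |a - b|) z =
      2*(f (z 1 - z 0) + f (z 2 - z 1) + f (z 3 - z 2)
        + f (z 2 - z 0) + f (z 3 - z 1) + f (z 3 - z 0)) := by
  have e01 : |z 0 - z 1| = z 1 - z 0 := by rw [abs_sub_comm]; exact abs_of_nonneg (by linarith)
  have e10 : |z 1 - z 0| = z 1 - z 0 := abs_of_nonneg (by linarith)
  have e02 : |z 0 - z 2| = z 2 - z 0 := by rw [abs_sub_comm]; exact abs_of_nonneg (by linarith)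
  have e20 : |z 2 - z 0| = z 2 - z 0 := abs_of_nonneg (by linarith)
  have e03 : |z 0 - z 3| = z 3 - z 0 := by rw [abs_sub_comm]; exact abs_of_nonneg (by linarith)
  have e30 : |z 3 - z 0| = z 3 - z 0 := abs_of_nonneg (by linarith)
  have e12 : |z 1 - z 2| = z 2 - z 1 := by rw [abs_sub_comm]; exact abs_of_nonneg (by linarith)
  have e21 : |z 2 - z 1| = z 2 - z 1 := abs_of_nonneg (by linarith)
  have e13 : |z 1 - z 3| = z 3 - z 1 := by rw [abs_sub_comm]; exact abs_of_nonneg (by linarith)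
  have e31 : |z 3 - z 1| = z 3 - z 1 := abs_of_nonneg (by linarith)
  have e23 : |z 2 - z 3| = z 3 - z 2 := by rw [abs_sub_comm]; exact abs_of_nonneg (by linarith)
  have e32 : |z 3 - z 2| = z 3 - z 2 := abs_of_nonneg (by linarith)
  simp only [energy4, Fin.sum_univ_four]
  have d01 : ((0: Fin 4) = 1) = False := by decide
  have d02 : ((0: Fin 4) = 2) = False := by decide
  have d03 : ((0: Fin 4) = 3) = False := by decide
  have d10 : ((1: Fin 4) = 0) = False := by decide
  have d12 : ((1: Fin 4) = 2) = False := by decide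
  have d13 : ((1: Fin 4) = 3) = False := by decide
  have d20 : ((2: Fin 4) = 0) = False := by decide
  have d21 : ((2: Fin 4) = 1) = False := by decide
  have d23 : ((2: Fin 4) = 3) = False := by decide
  have d30 : ((3: Fin 4) = 0) = False := by decide
  have d31 : ((3: Fin 4) = 1) = False := by decide
  have d32 : ((3: Fin 4) = 2) = False := by decide
  norm_num [d01,d02,d03,d10,d12,d13,d20,d21,d23,d30,d31,d32,
    e01, e10, e02, e20, e03, e30, e12, e21, e13, e31, e23, e32]
  ring

lemma adm_of_sorted (r R x0 x1 x2 x3 : ℝ) (hr : 0 < r)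
    (g01 : r/4 ≤ x1 - x0) (g12 : r/4 ≤ x2 - x1) (g23 : r/4 ≤ x3 - x2)
    (u01 : x1 - x0 ≤ R/2) (u12 : x2 - x1 ≤ R/2) (u23 : x3 - x2 ≤ R/2)
    (hl : -1 ≤ x0) (hl' : x0 ≤ -1 + R/4) (hu' : 1 - R/4 ≤ x3) (hu : x3 ≤ 1) :
    Admissible4 r R ![x0, x1, x2, x3] := by
  refine ⟨?_, ?_, ?_⟩
  · intro i
    fin_cases i <;> constructor <;> norm_num <;> linarith
  · have hlt : ∀ i j : Fin 4, i < j → r/4 ≤ (![x0,x1,x2,x3]) j - (![x0,x1,x2,x3]) i := by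
      intro i j hij
      fin_cases i <;> fin_cases j <;> (try exact absurd hij (by decide)) <;> norm_num <;> linarith
    intro i j hij
    rcases lt_or_gt_of_ne hij with h' | h'
    · rw [abs_sub_comm]; exact le_trans (hlt i j h') (le_abs_self _)
    · exact le_trans (hlt j i h') (le_abs_self _)
  · intro y hy
    obtain ⟨hy1, hy2⟩ := hy
    rcases le_total y ((x0 + x1)/2) with h | h
    · exact ⟨0, by rw [abs_le]; norm_num; constructor <;> linarith⟩
    · rcases le_total y ((x1 + x2)/2) with h2 | h2
      · exact ⟨1, by rw [abs_le]; norm_num; constructor <;> linarith⟩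
      · rcases le_total y ((x2 + x3)/2) with h3 | h3
        · exact ⟨2, by rw [abs_le]; norm_num [Matrix.cons_val_two, Matrix.cons_val_three, Matrix.head_cons, Matrix.tail_cons]; constructor <;> linarith⟩
        · exact ⟨3, by rw [abs_le]; norm_num [Matrix.cons_val_two, Matrix.cons_val_three, Matrix.head_cons, Matrix.tail_cons]; constructor <;> linarith⟩

lemma sorted_le (r R : ℝ) (f : ℝ → ℝ) (x z : Fin 4 → ℝ)
    (hmono : Monotone z) (hadm : Admissible4 r R z)
    (hx01 : x 0 ≤ x 1) (hx12 : x 1 ≤ x 2) (hx23 : x 2 ≤ x 3)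
    (H : ∀ a b c : ℝ, r/4 ≤ a → a ≤ R/2 → r/4 ≤ b → b ≤ R/2 → r/4 ≤ c → c ≤ R/2 →
      2 - R/2 ≤ a + b + c →
      f a + f b + f c + f (a+b) + f (b+c) + f (a+b+c)
        ≤ f (x 1 - x 0) + f (x 2 - x 1) + f (x 3 - x 2)
          + f (x 2 - x 0) + f (x 3 - x 1) + f (x 3 - x 0)) :
    energy4 (fun a b => f |a - b|) z ≤ energy4 (fun a b => f |a - b|) x := by
  obtain ⟨hIcc, hsep, hcov⟩ := hadm
  have h01 : z 0 ≤ z 1 := hmono (by decide)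
  have h12 : z 1 ≤ z 2 := hmono (by decide)
  have h23 : z 2 ≤ z 3 := hmono (by decide)
  have g01 : r/4 ≤ z 1 - z 0 := by
    have h := hsep 0 1 (by decide)
    rw [abs_sub_comm, abs_of_nonneg (by linarith)] at h
    linarith
  have g12 : r/4 ≤ z 2 - z 1 := by
    have h := hsep 1 2 (by decide)
    rw [abs_sub_comm, abs_of_nonneg (by linarith)] at h
    linarith
  have g23 : r/4 ≤ z 3 - z 2 := by
    have h := hsep 2 3 (by decide)
    rw [abs_sub_comm, abs_of_nonneg (by linarith)] at h
    linarith
  have gapU : ∀ p q : Fin 4, z p ≤ z q → (∀ i : Fin 4, z i ≤ z p ∨ z q ≤ z i) →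
      z q - z p ≤ R/2 := by
    intro p q hpq hsplit
    have hmem : (z p + z q)/2 ∈ Set.Icc (-1:ℝ) 1 := by
      constructor
      · have := (hIcc p).1; linarith
      · have := (hIcc q).2; linarith
    obtain ⟨i, hi⟩ := hcov _ hmem
    rw [abs_le] at hi
    rcases hsplit i with h | h
    · linarith [hi.2]
    · linarith [hi.1]
  have u01 : z 1 - z 0 ≤ R/2 := by
    refine gapU 0 1 h01 (fun i => ?_)
    fin_cases i
    · exact Or.inl le_rfl
    · exact Or.inr le_rfl
    · exact Or.inr h12
    · exact Or.inr (le_trans h12 h23)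
  have u12 : z 2 - z 1 ≤ R/2 := by
    refine gapU 1 2 h12 (fun i => ?_)
    fin_cases i
    · exact Or.inl h01
    · exact Or.inl le_rfl
    · exact Or.inr le_rfl
    · exact Or.inr h23
  have u23 : z 3 - z 2 ≤ R/2 := by
    refine gapU 2 3 h23 (fun i => ?_)
    fin_cases i
    · exact Or.inl (le_trans h01 h12)
    · exact Or.inl h12
    · exact Or.inl le_rfl
    · exact Or.inr le_rfl
  have hx0 : z 0 ≤ -1 + R/4 := by
    obtain ⟨i, hi⟩ := hcov (-1) ⟨le_refl _, by norm_num⟩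
    rw [abs_le] at hi
    have hzi : z 0 ≤ z i := hmono (Fin.zero_le i)
    linarith [hi.1]
  have hx3 : 1 - R/4 ≤ z 3 := by
    obtain ⟨i, hi⟩ := hcov 1 ⟨by norm_num, le_refl _⟩
    rw [abs_le] at hi
    have hzi : z i ≤ z 3 := hmono (by omega)
    linarith [hi.2]
  rw [energy4_sorted f z h01 h12 h23, energy4_sorted f x hx01 hx12 hx23]
  have key := H (z 1 - z 0) (z 2 - z 1) (z 3 - z 2) g01 u01 g12 u12 g23 u23 (by linarith)
  have e1 : z 1 - z 0 + (z 2 - z 1) = z 2 - z 0 := by ring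
  have e2 : z 2 - z 1 + (z 3 - z 2) = z 3 - z 1 := by ring
  have e3 : z 1 - z 0 + (z 2 - z 1) + (z 3 - z 2) = z 3 - z 0 := by ring
  rw [e3] at key
  rw [e1, e2] at key
  linarith

lemma reduce (r R : ℝ) (f : ℝ → ℝ) (x : Fin 4 → ℝ)
    (hx01 : x 0 ≤ x 1) (hx12 : x 1 ≤ x 2) (hx23 : x 2 ≤ x 3)
    (H : ∀ a b c : ℝ, r/4 ≤ a → a ≤ R/2 → r/4 ≤ b → b ≤ R/2 → r/4 ≤ c → c ≤ R/2 →
      2 - R/2 ≤ a + b + c →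
      f a + f b + f c + f (a+b) + f (b+c) + f (a+b+c)
        ≤ f (x 1 - x 0) + f (x 2 - x 1) + f (x 3 - x 2)
          + f (x 2 - x 0) + f (x 3 - x 1) + f (x 3 - x 0)) :
    ∀ y, Admissible4 r R y →
      energy4 (fun a b => f |a - b|) y ≤ energy4 (fun a b => f |a - b|) x := by
  intro y hy
  rw [← energy_perm (fun a b => f |a - b|) y (Tuple.sort y)]
  exact sorted_le r R f x (y ∘ Tuple.sort y) (Tuple.monotone_sort y)
    (adm_perm (Tuple.sort y) hy) hx01 hx12 hx23 H

/-- cases (ii)–(iv) of the interval theorem. -/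
theorem stmt_17 (r R : ℝ) (hr : 0 < r) (hR : 0 < R)
    (f : ℝ → ℝ) (hf : CompletelyMonotone f)
    (hr83 : r ≤ 8/3) (hR1 : 1 ≤ R) :
    ((2*r + 4*R ≥ 8 ∧ 8 > 3*r + 2*R) →
      IsMaxConfig r R f
        ![-1 + R/4, (-1 + R/4) + r/4, ((-1 + R/4) + r/4) + r/4, 1 - R/4]) ∧
    ((8 > 3*r + 2*R ∧ 6*R + r ≥ 8 ∧ 8 > 2*r + 4*R) →
      IsMaxConfig r R f
        ![-1 + R/4, ((1 - R/4) - R/2) - r/4, (1 - R/4) - R/2, 1 - R/4]) ∧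
    ((8 > 3*r + 2*R ∧ 8 > 6*R + r ∧ 8 > 2*r + 4*R) →
      IsMaxConfig r R f
        ![-1 + R/4, (-1 + R/4) + R/2, (1 - R/4) - R/2, 1 - R/4]) := by
  have hconv := cm_convex hf
  have hanti := cm_antitone hf
  refine ⟨?_, ?_, ?_⟩
  · -- case (ii)
    rintro ⟨hA, hB⟩
    constructor
    · exact adm_of_sorted r R _ _ _ _ hr (by linarith) (by linarith) (by linarith)
        (by linarith) (by linarith) (by linarith) (by linarith) (by linarith)
        (by linarith) (by linarith)
    · refine reduce r R f _ (by show (-1 + R/4 : ℝ) ≤ (-1 + R/4) + r/4; linarith)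
        (by show ((-1 + R/4) + r/4 : ℝ) ≤ ((-1 + R/4) + r/4) + r/4; linarith)
        (by show (((-1 + R/4) + r/4) + r/4 : ℝ) ≤ 1 - R/4; linarith) ?_
      intro a b c ha ha' hb hb' hc hc' hT
      have E01 : (![-1 + R/4, (-1 + R/4) + r/4, ((-1 + R/4) + r/4) + r/4, 1 - R/4] : Fin 4 → ℝ) 1
          - (![-1 + R/4, (-1 + R/4) + r/4, ((-1 + R/4) + r/4) + r/4, 1 - R/4] : Fin 4 → ℝ) 0
          = r/4 := by norm_num
      have E12 : (![-1 + R/4, (-1 + R/4) + r/4, ((-1 + R/4) + r/4) + r/4, 1 - R/4] : Fin 4 → ℝ) 2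
          - (![-1 + R/4, (-1 + R/4) + r/4, ((-1 + R/4) + r/4) + r/4, 1 - R/4] : Fin 4 → ℝ) 1
          = r/4 := by norm_num [Matrix.cons_val_two, Matrix.cons_val_three, Matrix.head_cons, Matrix.tail_cons]
      have E23 : (![-1 + R/4, (-1 + R/4) + r/4, ((-1 + R/4) + r/4) + r/4, 1 - R/4] : Fin 4 → ℝ) 3
          - (![-1 + R/4, (-1 + R/4) + r/4, ((-1 + R/4) + r/4) + r/4, 1 - R/4] : Fin 4 → ℝ) 2
          = 2 - R/2 - 2*(r/4) := by norm_num [Matrix.cons_val_two, Matrix.cons_val_three, Matrix.head_cons, Matrix.tail_cons]; try ring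
      have E02 : (![-1 + R/4, (-1 + R/4) + r/4, ((-1 + R/4) + r/4) + r/4, 1 - R/4] : Fin 4 → ℝ) 2
          - (![-1 + R/4, (-1 + R/4) + r/4, ((-1 + R/4) + r/4) + r/4, 1 - R/4] : Fin 4 → ℝ) 0
          = 2*(r/4) := by norm_num [Matrix.cons_val_two, Matrix.cons_val_three, Matrix.head_cons, Matrix.tail_cons]; try ring
      have E13 : (![-1 + R/4, (-1 + R/4) + r/4, ((-1 + R/4) + r/4) + r/4, 1 - R/4] : Fin 4 → ℝ) 3
          - (![-1 + R/4, (-1 + R/4) + r/4, ((-1 + R/4) + r/4) + r/4, 1 - R/4] : Fin 4 → ℝ) 1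
          = 2 - R/2 - r/4 := by norm_num [Matrix.cons_val_two, Matrix.cons_val_three, Matrix.head_cons, Matrix.tail_cons]; try ring
      have E03 : (![-1 + R/4, (-1 + R/4) + r/4, ((-1 + R/4) + r/4) + r/4, 1 - R/4] : Fin 4 → ℝ) 3
          - (![-1 + R/4, (-1 + R/4) + r/4, ((-1 + R/4) + r/4) + r/4, 1 - R/4] : Fin 4 → ℝ) 0
          = 2 - R/2 := by norm_num [Matrix.cons_val_two, Matrix.cons_val_three, Matrix.head_cons, Matrix.tail_cons]; try ring
      rw [E01, E12, E23, E02, E13, E03]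
      exact caseII hconv hanti (by linarith) (by linarith) ha hb hc hT
  · -- case (iii)
    rintro ⟨hB, hC, hD⟩
    constructor
    · exact adm_of_sorted r R _ _ _ _ hr (by linarith) (by linarith) (by linarith)
        (by linarith) (by linarith) (by linarith) (by linarith) (by linarith)
        (by linarith) (by linarith)
    · refine reduce r R f _
        (by show (-1 + R/4 : ℝ) ≤ ((1 - R/4) - R/2) - r/4; linarith)
        (by show (((1 - R/4) - R/2) - r/4 : ℝ) ≤ (1 - R/4) - R/2; linarith)
        (by show ((1 - R/4) - R/2 : ℝ) ≤ 1 - R/4; linarith) ?_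
      intro a b c ha ha' hb hb' hc hc' hT
      have E01 : (![-1 + R/4, ((1 - R/4) - R/2) - r/4, (1 - R/4) - R/2, 1 - R/4] : Fin 4 → ℝ) 1
          - (![-1 + R/4, ((1 - R/4) - R/2) - r/4, (1 - R/4) - R/2, 1 - R/4] : Fin 4 → ℝ) 0
          = 2 - R/2 - R/2 - r/4 := by norm_num; try ring
      have E12 : (![-1 + R/4, ((1 - R/4) - R/2) - r/4, (1 - R/4) - R/2, 1 - R/4] : Fin 4 → ℝ) 2
          - (![-1 + R/4, ((1 - R/4) - R/2) - r/4, (1 - R/4) - R/2, 1 - R/4] : Fin 4 → ℝ) 1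
          = r/4 := by norm_num [Matrix.cons_val_two, Matrix.cons_val_three, Matrix.head_cons, Matrix.tail_cons]
      have E23 : (![-1 + R/4, ((1 - R/4) - R/2) - r/4, (1 - R/4) - R/2, 1 - R/4] : Fin 4 → ℝ) 3
          - (![-1 + R/4, ((1 - R/4) - R/2) - r/4, (1 - R/4) - R/2, 1 - R/4] : Fin 4 → ℝ) 2
          = R/2 := by norm_num [Matrix.cons_val_two, Matrix.cons_val_three, Matrix.head_cons, Matrix.tail_cons]; try ring
      have E02 : (![-1 + R/4, ((1 - R/4) - R/2) - r/4, (1 - R/4) - R/2, 1 - R/4] : Fin 4 → ℝ) 2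
          - (![-1 + R/4, ((1 - R/4) - R/2) - r/4, (1 - R/4) - R/2, 1 - R/4] : Fin 4 → ℝ) 0
          = 2 - R/2 - R/2 := by norm_num [Matrix.cons_val_two, Matrix.cons_val_three, Matrix.head_cons, Matrix.tail_cons]; try ring
      have E13 : (![-1 + R/4, ((1 - R/4) - R/2) - r/4, (1 - R/4) - R/2, 1 - R/4] : Fin 4 → ℝ) 3
          - (![-1 + R/4, ((1 - R/4) - R/2) - r/4, (1 - R/4) - R/2, 1 - R/4] : Fin 4 → ℝ) 1
          = r/4 + R/2 := by norm_num [Matrix.cons_val_two, Matrix.cons_val_three, Matrix.head_cons, Matrix.tail_cons]; try ring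
      have E03 : (![-1 + R/4, ((1 - R/4) - R/2) - r/4, (1 - R/4) - R/2, 1 - R/4] : Fin 4 → ℝ) 3
          - (![-1 + R/4, ((1 - R/4) - R/2) - r/4, (1 - R/4) - R/2, 1 - R/4] : Fin 4 → ℝ) 0
          = 2 - R/2 := by norm_num [Matrix.cons_val_two, Matrix.cons_val_three, Matrix.head_cons, Matrix.tail_cons]; try ring
      rw [E01, E12, E23, E02, E13, E03]
      exact caseIII hconv hanti (by linarith) (by linarith) (by linarith)
        ha ha' hb hb' hc hc' hT
  · -- case (iv)
    rintro ⟨hB, hC, hD⟩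
    constructor
    · exact adm_of_sorted r R _ _ _ _ hr (by linarith) (by linarith) (by linarith)
        (by linarith) (by linarith) (by linarith) (by linarith) (by linarith)
        (by linarith) (by linarith)
    · refine reduce r R f _
        (by show (-1 + R/4 : ℝ) ≤ (-1 + R/4) + R/2; linarith)
        (by show ((-1 + R/4) + R/2 : ℝ) ≤ (1 - R/4) - R/2; linarith)
        (by show ((1 - R/4) - R/2 : ℝ) ≤ 1 - R/4; linarith) ?_
      intro a b c ha ha' hb hb' hc hc' hT
      have E01 : (![-1 + R/4, (-1 + R/4) + R/2, (1 - R/4) - R/2, 1 - R/4] : Fin 4 → ℝ) 1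
          - (![-1 + R/4, (-1 + R/4) + R/2, (1 - R/4) - R/2, 1 - R/4] : Fin 4 → ℝ) 0
          = R/2 := by norm_num
      have E12 : (![-1 + R/4, (-1 + R/4) + R/2, (1 - R/4) - R/2, 1 - R/4] : Fin 4 → ℝ) 2
          - (![-1 + R/4, (-1 + R/4) + R/2, (1 - R/4) - R/2, 1 - R/4] : Fin 4 → ℝ) 1
          = 2 - R/2 - 2*(R/2) := by norm_num [Matrix.cons_val_two, Matrix.cons_val_three, Matrix.head_cons, Matrix.tail_cons]; try ring
      have E23 : (![-1 + R/4, (-1 + R/4) + R/2, (1 - R/4) - R/2, 1 - R/4] : Fin 4 → ℝ) 3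
          - (![-1 + R/4, (-1 + R/4) + R/2, (1 - R/4) - R/2, 1 - R/4] : Fin 4 → ℝ) 2
          = R/2 := by norm_num [Matrix.cons_val_two, Matrix.cons_val_three, Matrix.head_cons, Matrix.tail_cons]; try ring
      have E02 : (![-1 + R/4, (-1 + R/4) + R/2, (1 - R/4) - R/2, 1 - R/4] : Fin 4 → ℝ) 2
          - (![-1 + R/4, (-1 + R/4) + R/2, (1 - R/4) - R/2, 1 - R/4] : Fin 4 → ℝ) 0
          = 2 - R/2 - R/2 := by norm_num [Matrix.cons_val_two, Matrix.cons_val_three, Matrix.head_cons, Matrix.tail_cons]; try ring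
      have E13 : (![-1 + R/4, (-1 + R/4) + R/2, (1 - R/4) - R/2, 1 - R/4] : Fin 4 → ℝ) 3
          - (![-1 + R/4, (-1 + R/4) + R/2, (1 - R/4) - R/2, 1 - R/4] : Fin 4 → ℝ) 1
          = 2 - R/2 - R/2 := by norm_num [Matrix.cons_val_two, Matrix.cons_val_three, Matrix.head_cons, Matrix.tail_cons]; try ring
      have E03 : (![-1 + R/4, (-1 + R/4) + R/2, (1 - R/4) - R/2, 1 - R/4] : Fin 4 → ℝ) 3
          - (![-1 + R/4, (-1 + R/4) + R/2, (1 - R/4) - R/2, 1 - R/4] : Fin 4 → ℝ) 0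
          = 2 - R/2 := by norm_num [Matrix.cons_val_two, Matrix.cons_val_three, Matrix.head_cons, Matrix.tail_cons]; try ring
      rw [E01, E12, E23, E02, E13, E03]
      exact caseIV hconv hanti (by linarith) (by linarith)
        ha ha' hb hb' hc hc' hT

end
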